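/- arXiv:2603.28155 — 2 statements merged into one kernel-verified Lean document; each statement's English description precedes it below -/
import Mathlib

section
/- Consider the scalar explicit Euler scheme y_{m+1} = y_m + τ_m(-a y_m + y_m²) with a > 0, y_0 > a, and adaptive step τ_m = min{τ₀, c/y_m} with τ₀, c > 0, c < 1, and τ₀ a < 1. Then the sequence (y_m) is strictly increasing and tends to infinity, while the total time Σ_m τ_m converges (is finite). -/
open Filter

theorem explicit_euler_blowup (a τ₀ c : ℝ) (ha : 0 < a) (hτ₀ : 0 < τ₀)
    (hc : 0 < c) (hc1 : c < 1) (hτa : τ₀ * a < 1)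
    (y : ℕ → ℝ) (hy0 : a < y 0)
    (hy : ∀ m, y (m + 1) = y m + min τ₀ (c / y m) * (-a * y m + y m ^ 2)) :
    StrictMono y ∧ Tendsto y atTop atTop ∧
      Summable (fun m => min τ₀ (c / y m)) := by
  set δ := min (τ₀ * a) c with hδdef
  have hδ : 0 < δ := lt_min (mul_pos hτ₀ ha) hc
  -- key induction: a < y m and (1+δ)^m * (y 0 - a) ≤ y m - a
  have key : ∀ m, a < y m ∧ (1 + δ) ^ m * (y 0 - a) ≤ y m - a := by
    intro m
    induction m with
    | zero => exact ⟨hy0, by simp⟩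
    | succ m ih =>
      obtain ⟨hym, hgm⟩ := ih
      have hympos : 0 < y m := ha.trans hym
      have ht : min τ₀ (c / y m) * y m = min (τ₀ * y m) c := by
        rw [min_mul_of_nonneg _ _ hympos.le, div_mul_cancel₀ _ hympos.ne']
      have htδ : δ ≤ min τ₀ (c / y m) * y m := by
        rw [ht]
        exact min_le_min (mul_le_mul_of_nonneg_left hym.le hτ₀.le) le_rfl
      have heq : y (m + 1) - a = (1 + min τ₀ (c / y m) * y m) * (y m - a) := by
        rw [hy m]; ring
      have hya : 0 < y m - a := sub_pos.mpr hym
      constructor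
      · rw [← sub_pos, heq]
        positivity
      · rw [heq, pow_succ, mul_comm ((1+δ)^m), mul_assoc]
        have h1 : (1 + δ) * ((1 + δ) ^ m * (y 0 - a)) ≤ (1 + δ) * (y m - a) :=
          mul_le_mul_of_nonneg_left hgm (by linarith)
        calc (1 + δ) * ((1 + δ) ^ m * (y 0 - a)) ≤ (1 + δ) * (y m - a) := h1
          _ ≤ (1 + min τ₀ (c / y m) * y m) * (y m - a) :=
            mul_le_mul_of_nonneg_right (by linarith) hya.le
  have hmono : StrictMono y := by
    apply strictMono_nat_of_lt_succ
    intro m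
    obtain ⟨hym, _⟩ := key m
    have hympos : 0 < y m := ha.trans hym
    have hya : 0 < y m - a := sub_pos.mpr hym
    have hτpos : 0 < min τ₀ (c / y m) := lt_min hτ₀ (div_pos hc hympos)
    have : y (m + 1) = y m + min τ₀ (c / y m) * (y m * (y m - a)) := by
      rw [hy m]; ring_nf
    nlinarith [mul_pos hτpos (mul_pos hympos hya)]
  refine ⟨hmono, ?_, ?_⟩
  · have hlim : Tendsto (fun m => a + (1 + δ) ^ m * (y 0 - a)) atTop atTop :=
      tendsto_atTop_add_const_left atTop a
        (Tendsto.atTop_mul_const (sub_pos.mpr hy0)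
          (tendsto_pow_atTop_atTop_of_one_lt (by linarith : 1 < 1 + δ)))
    refine tendsto_atTop_mono (fun m => ?_) hlim
    have := (key m).2
    linarith
  · have h0 : (0:ℝ) < y 0 - a := sub_pos.mpr hy0
    have hsum : Summable (fun m : ℕ => c / (y 0 - a) * (1 / (1 + δ)) ^ m) := by
      exact (summable_geometric_of_lt_one (by positivity)
        (by rw [div_lt_one (by linarith)]; linarith)).mul_left _
    refine Summable.of_nonneg_of_le (fun m => ?_) (fun m => ?_) hsum
    · obtain ⟨hym, _⟩ := key m
      exact le_min hτ₀.le (div_pos hc (ha.trans hym)).le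
    · obtain ⟨hym, hgm⟩ := key m
      have hympos : 0 < y m := ha.trans hym
      have hya : 0 < y m - a := sub_pos.mpr hym
      have hpow : (0:ℝ) < (1 + δ) ^ m := by positivity
      have h1 : min τ₀ (c / y m) ≤ c / y m := min_le_right _ _
      have h2 : c / y m ≤ c / (y m - a) :=
        div_le_div_of_nonneg_left hc.le hya (by linarith)
      have h3 : c / (y m - a) ≤ c / ((1 + δ) ^ m * (y 0 - a)) :=
        div_le_div_of_nonneg_left hc.le (by positivity) hgm
      have h4 : c / ((1 + δ) ^ m * (y 0 - a)) = c / (y 0 - a) * (1 / (1 + δ)) ^ m := by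
        rw [div_pow, one_pow, div_mul_div_comm, mul_one, mul_comm ((1 + δ) ^ m)]
      linarith [h4 ▸ h3]
end

section
/- Let a ≥ 0, c > 0, p > 1, and suppose φ : [0, T) → (0, ∞) is differentiable with φ'(t) ≥ -a φ(t) + c φ(t)^p and c φ(0)^{p-1} > a. Then for all t ∈ [0,T), c φ(t)^{p-1} - a ≥ (c φ(0)^{p-1} - a) e^{a(p-1)t}, and consequently T ≤ (a(p-1))^{-1} log(c φ(0)^{p-1}/(c φ(0)^{p-1} - a)) when a > 0. -/
open Set Real

theorem quantitative_blowup (a c p T : ℝ) (ha : 0 ≤ a) (hc : 0 < c) (hp : 1 < p)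
    (hT : 0 < T) (φ d : ℝ → ℝ)
    (hφpos : ∀ t ∈ Ico 0 T, 0 < φ t)
    (hderiv : ∀ t ∈ Ico 0 T, HasDerivAt φ (d t) t)
    (hineq : ∀ t ∈ Ico 0 T, d t ≥ -a * φ t + c * φ t ^ p)
    (hinit : a < c * φ 0 ^ (p - 1)) :
    (∀ t ∈ Ico 0 T,
        c * φ t ^ (p - 1) - a ≥ (c * φ 0 ^ (p - 1) - a) * Real.exp (a * (p - 1) * t)) ∧
      (0 < a → T ≤ (a * (p - 1))⁻¹ *
        Real.log (c * φ 0 ^ (p - 1) / (c * φ 0 ^ (p - 1) - a))) := by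
  have hp1 : 0 < p - 1 := by linarith
  set ψ : ℝ → ℝ := fun t => c * φ t ^ (p - 1) - a with hψdef
  set ψ' : ℝ → ℝ := fun t => c * (d t * (p - 1) * φ t ^ (p - 1 - 1)) with hψ'def
  have hψderiv : ∀ t ∈ Ico 0 T, HasDerivAt ψ (ψ' t) t := by
    intro t ht
    exact (((hderiv t ht).rpow_const (Or.inl (hφpos t ht).ne')).const_mul c).sub_const a
  have hψa : ∀ t ∈ Ico 0 T, ψ t + a = c * φ t ^ (p - 1) := by
    intro t ht; simp [hψdef]
  have hψapos : ∀ t ∈ Ico 0 T, 0 < ψ t + a := by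
    intro t ht
    rw [hψa t ht]
    exact mul_pos hc (Real.rpow_pos_of_pos (hφpos t ht) _)
  have hkey : ∀ t ∈ Ico 0 T, ψ' t ≥ (p - 1) * ψ t * (ψ t + a) := by
    intro t ht
    have hx : 0 < φ t := hφpos t ht
    have hd : d t ≥ -a * φ t + c * φ t ^ p := hineq t ht
    have e1 : φ t ^ (p - 1 - 1) * φ t = φ t ^ (p - 1) := by
      rw [← Real.rpow_add_one hx.ne' (p - 1 - 1)]
      norm_num
    have e2 : φ t ^ (p - 1 - 1) * φ t ^ p = φ t ^ (p - 1) * φ t ^ (p - 1) := by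
      rw [← Real.rpow_add hx, ← Real.rpow_add hx]
      congr 1; ring
    have hX : 0 ≤ φ t ^ (p - 1 - 1) := Real.rpow_nonneg hx.le _
    have h3 : 0 ≤ c * (p - 1) * φ t ^ (p - 1 - 1) * (d t - (-a * φ t + c * φ t ^ p)) := by
      apply mul_nonneg
      · positivity
      · linarith
    have e3 : c * ((-a * φ t + c * φ t ^ p) * (p - 1) * φ t ^ (p - 1 - 1)) =
        (p - 1) * (c * φ t ^ (p - 1) - a) * (c * φ t ^ (p - 1) - a + a) := by
      linear_combination (-a * c * (p - 1)) * e1 + (c ^ 2 * (p - 1)) * e2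
    simp only [hψ'def, hψdef]
    calc c * (d t * (p - 1) * φ t ^ (p - 1 - 1))
        ≥ c * ((-a * φ t + c * φ t ^ p) * (p - 1) * φ t ^ (p - 1 - 1)) := by nlinarith [h3]
      _ = (p - 1) * (c * φ t ^ (p - 1) - a) * (c * φ t ^ (p - 1) - a + a) := e3
  have hψ0 : 0 < ψ 0 := by
    simp only [hψdef]; linarith
  -- Step 1: positivity of ψ on [0, T)
  have hψpos : ∀ t ∈ Ico 0 T, 0 < ψ t := by
    by_contra hcon
    push_neg at hcon
    obtain ⟨t1, ht1, hψt1⟩ := hcon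
    set S : Set ℝ := Icc 0 t1 ∩ ψ ⁻¹' Iic 0 with hSdef
    have hsub : Icc 0 t1 ⊆ Ico 0 T := fun x hx => ⟨hx.1, lt_of_le_of_lt hx.2 ht1.2⟩
    have hcont : ContinuousOn ψ (Icc 0 t1) := fun x hx =>
      (hψderiv x (hsub hx)).continuousAt.continuousWithinAt
    have hScl : IsClosed S := hcont.preimage_isClosed_of_isClosed isClosed_Icc isClosed_Iic
    have hSne : S.Nonempty := ⟨t1, ⟨ht1.1, le_refl _⟩, hψt1⟩
    have hSbdd : BddBelow S := ⟨0, fun x hx => hx.1.1⟩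
    set s := sInf S with hsdef
    have hsS : s ∈ S := hScl.csInf_mem hSne hSbdd
    have hs0 : 0 ≤ s := hsS.1.1
    have hst1 : s ≤ t1 := hsS.1.2
    have hψs : ψ s ≤ 0 := hsS.2
    have hspos : 0 < s := by
      rcases hs0.lt_or_eq with h | h
      · exact h
      · exfalso; rw [← h] at hψs; linarith
    have hlt : ∀ x, 0 ≤ x → x < s → 0 < ψ x := by
      intro x hx0 hxs
      by_contra hx
      push_neg at hx
      have : x ∈ S := ⟨⟨hx0, hxs.le.trans hst1⟩, hx⟩
      exact absurd (csInf_le hSbdd this) (not_le.mpr hxs)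
    have hsub2 : Icc 0 s ⊆ Ico 0 T := fun x hx =>
      ⟨hx.1, lt_of_le_of_lt (hx.2.trans hst1) ht1.2⟩
    have hmono : MonotoneOn ψ (Icc 0 s) := by
      apply monotoneOn_of_deriv_nonneg (convex_Icc 0 s)
        (fun x hx => (hψderiv x (hsub2 hx)).continuousAt.continuousWithinAt)
        (fun x hx => ((hψderiv x (hsub2 (interior_subset hx))).differentiableAt).differentiableWithinAt)
      intro x hx
      rw [interior_Icc] at hx
      have hxI : x ∈ Ico 0 T := hsub2 ⟨hx.1.le, hx.2.le⟩
      rw [(hψderiv x hxI).deriv]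
      have h1 := hkey x hxI
      have h2 := hψapos x hxI
      have h3 := hlt x hx.1.le hx.2
      nlinarith [mul_nonneg (mul_nonneg hp1.le h3.le) h2.le]
    have := hmono (left_mem_Icc.mpr hs0) ⟨hs0, le_refl s⟩ hs0
    linarith
  set L := a * (p - 1) with hLdef
  have hL0 : 0 ≤ L := mul_nonneg ha hp1.le
  -- Step 2: the exponential lower bound
  have main1 : ∀ t ∈ Ico 0 T, ψ t ≥ ψ 0 * Real.exp (L * t) := by
    intro t ht
    set g : ℝ → ℝ := fun x => ψ x * Real.exp (-L * x) with hgdef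
    have hsub2 : Icc 0 t ⊆ Ico 0 T := fun x hx => ⟨hx.1, lt_of_le_of_lt hx.2 ht.2⟩
    have hgderiv : ∀ x ∈ Ico 0 T, HasDerivAt g
        (ψ' x * Real.exp (-L * x) + ψ x * (Real.exp (-L * x) * -L)) x := by
      intro x hx
      have hexp : HasDerivAt (fun x => Real.exp (-L * x)) (Real.exp (-L * x) * -L) x := by
        simpa using ((hasDerivAt_id x).const_mul (-L)).exp
      exact (hψderiv x hx).mul hexp
    have hmono : MonotoneOn g (Icc 0 t) := by
      apply monotoneOn_of_deriv_nonneg (convex_Icc 0 t)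
        (fun x hx => (hgderiv x (hsub2 hx)).continuousAt.continuousWithinAt)
        (fun x hx => ((hgderiv x (hsub2 (interior_subset hx))).differentiableAt).differentiableWithinAt)
      intro x hx
      rw [interior_Icc] at hx
      have hxI : x ∈ Ico 0 T := hsub2 ⟨hx.1.le, hx.2.le⟩
      rw [(hgderiv x hxI).deriv]
      have h1 := hkey x hxI
      have h2 := hψpos x hxI
      have hE : 0 < Real.exp (-L * x) := Real.exp_pos _
      have : ψ' x - L * ψ x ≥ (p - 1) * ψ x * ψ x := by
        simp only [hLdef] at *
        nlinarith
      nlinarith [mul_nonneg (mul_nonneg (mul_nonneg hp1.le h2.le) h2.le) hE.le]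
    have hg := hmono (left_mem_Icc.mpr ht.1) ⟨ht.1, le_refl t⟩ ht.1
    have hg0 : g 0 = ψ 0 := by simp [hgdef]
    have hgt : g t = ψ t * Real.exp (-L * t) := rfl
    rw [hg0, hgt] at hg
    have hE : 0 < Real.exp (L * t) := Real.exp_pos _
    have hEE : Real.exp (-L * t) * Real.exp (L * t) = 1 := by
      rw [← Real.exp_add]; norm_num
    calc ψ t = ψ t * Real.exp (-L * t) * Real.exp (L * t) := by
          rw [mul_assoc, hEE, mul_one]
      _ ≥ ψ 0 * Real.exp (L * t) := mul_le_mul_of_nonneg_right hg hE.le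
  constructor
  · intro t ht
    have := main1 t ht
    simpa [hψdef, hLdef] using this
  -- Step 3: the bound on T
  intro haa
  have hLpos : 0 < L := mul_pos haa hp1
  set B := L⁻¹ * Real.log (c * φ 0 ^ (p - 1) / (c * φ 0 ^ (p - 1) - a)) with hBdef
  have hratio : 1 < c * φ 0 ^ (p - 1) / (c * φ 0 ^ (p - 1) - a) := by
    rw [lt_div_iff₀ (by simpa [hψdef] using hψ0)]
    linarith
  have hstep : ∀ t ∈ Ico 0 T, t < B := by
    intro t ht
    set h : ℝ → ℝ := fun x => ((ψ x)⁻¹ + a⁻¹) * Real.exp (L * x) with hhdef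
    have hsub2 : Icc 0 t ⊆ Ico 0 T := fun x hx => ⟨hx.1, lt_of_le_of_lt hx.2 ht.2⟩
    have hhderiv : ∀ x ∈ Ico 0 T, HasDerivAt h
        ((-ψ' x / ψ x ^ 2) * Real.exp (L * x) + ((ψ x)⁻¹ + a⁻¹) * (Real.exp (L * x) * L)) x := by
      intro x hx
      have hexp : HasDerivAt (fun x => Real.exp (L * x)) (Real.exp (L * x) * L) x := by
        simpa using ((hasDerivAt_id x).const_mul L).exp
      exact (((hψderiv x hx).inv (hψpos x hx).ne').add_const a⁻¹).mul hexp
    have hanti : AntitoneOn h (Icc 0 t) := by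
      apply antitoneOn_of_deriv_nonpos (convex_Icc 0 t)
        (fun x hx => (hhderiv x (hsub2 hx)).continuousAt.continuousWithinAt)
        (fun x hx => ((hhderiv x (hsub2 (interior_subset hx))).differentiableAt).differentiableWithinAt)
      intro x hx
      rw [interior_Icc] at hx
      have hxI : x ∈ Ico 0 T := hsub2 ⟨hx.1.le, hx.2.le⟩
      rw [(hhderiv x hxI).deriv]
      have h1 := hkey x hxI
      have h2 := hψpos x hxI
      have hE : 0 < Real.exp (L * x) := Real.exp_pos _
      have hne : ψ x ≠ 0 := h2.ne'
      have key : -ψ' x / ψ x ^ 2 + ((ψ x)⁻¹ + a⁻¹) * L ≤ 0 := by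
        have heq : -ψ' x / ψ x ^ 2 + ((ψ x)⁻¹ + a⁻¹) * L =
            (-ψ' x * a + (a * ψ x + ψ x ^ 2) * L) / (a * ψ x ^ 2) := by
          field_simp
        rw [heq]
        apply div_nonpos_of_nonpos_of_nonneg
        · simp only [hLdef]
          nlinarith
        · positivity
      calc -ψ' x / ψ x ^ 2 * Real.exp (L * x) + ((ψ x)⁻¹ + a⁻¹) * (Real.exp (L * x) * L)
          = (-ψ' x / ψ x ^ 2 + ((ψ x)⁻¹ + a⁻¹) * L) * Real.exp (L * x) := by ring
        _ ≤ 0 := mul_nonpos_of_nonpos_of_nonneg key hE.le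
    have hh := hanti (left_mem_Icc.mpr ht.1) ⟨ht.1, le_refl t⟩ ht.1
    have hh0 : h 0 = (ψ 0)⁻¹ + a⁻¹ := by simp [hhdef]
    rw [hh0] at hh
    have hψt := hψpos t ht
    have hE : 0 < Real.exp (L * t) := Real.exp_pos _
    have hlt : a⁻¹ * Real.exp (L * t) < (ψ 0)⁻¹ + a⁻¹ := by
      have : a⁻¹ * Real.exp (L * t) < h t := by
        have : 0 < (ψ t)⁻¹ := inv_pos.mpr hψt
        simp only [hhdef]
        nlinarith
      linarith
    have hexp : Real.exp (L * t) < c * φ 0 ^ (p - 1) / (c * φ 0 ^ (p - 1) - a) := by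
      have hψ0' : ψ 0 = c * φ 0 ^ (p - 1) - a := by simp [hψdef]
      rw [lt_div_iff₀ (by linarith : (0:ℝ) < c * φ 0 ^ (p - 1) - a)]
      have h5 : Real.exp (L * t) < a * (ψ 0)⁻¹ + 1 := by
        calc Real.exp (L * t) = a * (a⁻¹ * Real.exp (L * t)) := by field_simp
          _ < a * ((ψ 0)⁻¹ + a⁻¹) := mul_lt_mul_of_pos_left hlt haa
          _ = a * (ψ 0)⁻¹ + 1 := by field_simp
      have h6 : Real.exp (L * t) * ψ 0 < (a * (ψ 0)⁻¹ + 1) * ψ 0 :=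
        mul_lt_mul_of_pos_right h5 hψ0
      have h7 : (a * (ψ 0)⁻¹ + 1) * ψ 0 = a + ψ 0 := by field_simp
      rw [h7] at h6
      rw [← hψ0']
      linarith
    have := (Real.lt_log_iff_exp_lt (by positivity)).mpr hexp
    rw [hBdef]
    calc t = L⁻¹ * (L * t) := by field_simp
      _ < L⁻¹ * Real.log (c * φ 0 ^ (p - 1) / (c * φ 0 ^ (p - 1) - a)) := by
          apply mul_lt_mul_of_pos_left this (inv_pos.mpr hLpos)
  by_contra hcon
  push_neg at hcon
  have hB0 : 0 ≤ B := by
    rw [hBdef]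
    apply mul_nonneg (inv_nonneg.mpr hLpos.le)
    exact Real.log_nonneg hratio.le
  exact absurd (hstep B ⟨hB0, hcon⟩) (lt_irrefl B)
end
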